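/- arXiv:1007.0725 — 8 statements merged into one kernel-verified Lean document; each statement's English description precedes it below -/
import Mathlib

section
/- Let Z be a complex symmetric N×N matrix with positive definite imaginary part, and let S = [[A, B], [C, D]] be a real symplectic 2N×2N matrix. Then A + BZ is invertible. -/
open Matrix
open scoped ComplexOrder

/-!
If `(A + B Z) v = 0`, the vector `w = (v, Z v)` is sent by `S` to `(0, (C + D Z) v)`, on which the
Hermitian symplectic form `w ↦ wᴴ J w` vanishes. A real symplectic matrix preserves this form, so
it vanishes at `w` too; but there it equals `vᴴ (Zᴴ - Z) v = -2i · vᴴ (Im Z) v`, which is nonzero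
for `v ≠ 0`.
-/

namespace Matrix

variable {l n R : Type*}

theorem star_mulVec_dotProduct_mulVec_mulVec [Fintype n] [Semiring R] [StarRing R]
    {M G : Matrix n n R} (h : Mᴴ * G * M = G) (u w : n → R) :
    star (M *ᵥ u) ⬝ᵥ (G *ᵥ (M *ᵥ w)) = star u ⬝ᵥ (G *ᵥ w) := by
  rw [star_mulVec, ← dotProduct_mulVec, mulVec_mulVec, mulVec_mulVec, h]

theorem star_sumElim_dotProduct_J_mulVec_sumElim [Fintype l] [DecidableEq l] [CommRing R]
    [StarRing R] (x y x' y' : l → R) :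
    star (Sum.elim x y) ⬝ᵥ (J l R *ᵥ Sum.elim x' y') = star y ⬝ᵥ x' - star x ⬝ᵥ y' := by
  simp [J, fromBlocks_mulVec, Function.star_sumElim, neg_mulVec, sub_eq_neg_add]

theorem fromBlocks_zero_one_neg_one_zero [DecidableEq l] [CommRing R] :
    fromBlocks (0 : Matrix l l R) 1 (-1) 0 = -J l R := by
  simp [J, fromBlocks_neg]

theorem isUnit_add_mul_of_conjTranspose_mul_J_mul [Fintype l] [DecidableEq l]
    {A B C D : Matrix l l ℂ} (hS : (fromBlocks A B C D)ᴴ * J l ℂ * fromBlocks A B C D = J l ℂ)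
    {Z : Matrix l l ℂ} (hZ : ((2 * Complex.I)⁻¹ • (Z - Zᴴ)).PosDef) :
    IsUnit (A + B * Z) := by
  rw [isUnit_iff_isUnit_det, isUnit_iff_ne_zero]
  intro hdet
  obtain ⟨v, hv0, hv⟩ := exists_mulVec_eq_zero_iff.mpr hdet
  have hSv : fromBlocks A B C D *ᵥ Sum.elim v (Z *ᵥ v) =
      Sum.elim (0 : l → ℂ) ((C + D * Z) *ᵥ v) := by
    simp only [fromBlocks_mulVec, Sum.elim_comp_inl, Sum.elim_comp_inr, mulVec_mulVec,
      ← add_mulVec, hv]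
  have hform : star v ⬝ᵥ (Zᴴ *ᵥ v) - star v ⬝ᵥ (Z *ᵥ v) = 0 := by
    have h := star_mulVec_dotProduct_mulVec_mulVec hS (Sum.elim v (Z *ᵥ v))
      (Sum.elim v (Z *ᵥ v))
    rw [hSv, star_sumElim_dotProduct_J_mulVec_sumElim, star_sumElim_dotProduct_J_mulVec_sumElim,
      star_mulVec Z, ← dotProduct_mulVec] at h
    simpa using h.symm
  have hpos := hZ.dotProduct_mulVec_pos hv0
  rw [smul_mulVec, dotProduct_smul, sub_mulVec, dotProduct_sub, ← neg_sub, hform, neg_zero,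
    smul_zero] at hpos
  exact lt_irrefl 0 hpos

end Matrix

theorem APlusBZ_invertible {N : ℕ} (Z : Matrix (Fin N) (Fin N) ℂ) (hZsymm : Zᵀ = Z)
    (hImZ : ((2 * Complex.I)⁻¹ • (Z - Z.map (starRingEnd ℂ))).PosDef)
    (A B C D : Matrix (Fin N) (Fin N) ℝ)
    (hS : fromBlocks A B C D * fromBlocks (0 : Matrix (Fin N) (Fin N) ℝ) 1 (-1) 0 *
        (fromBlocks A B C D)ᵀ = fromBlocks 0 1 (-1) 0) :
    IsUnit (A.map Complex.ofReal + B.map Complex.ofReal * Z) := by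
  have hSymp : fromBlocks A B C D ∈ symplecticGroup (Fin N) ℝ := by
    rwa [fromBlocks_zero_one_neg_one_zero, mul_neg, neg_mul, neg_inj,
      ← SymplecticGroup.mem_iff] at hS
  have hSc := SymplecticGroup.mem_iff'.mp (SymplecticGroup.map_mem hSymp Complex.ofRealHom)
  have hreal : ∀ M : Matrix (Fin N ⊕ Fin N) (Fin N ⊕ Fin N) ℝ,
      (M.map Complex.ofRealHom)ᵀ = (M.map Complex.ofRealHom)ᴴ := fun M => by ext; simp
  rw [hreal, fromBlocks_map] at hSc
  have hZ : Zᴴ = Z.map (starRingEnd ℂ) := by rw [conjTranspose, hZsymm]; rfl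
  exact isUnit_add_mul_of_conjTranspose_mul_J_mul hSc (hZ ▸ hImZ)
end

section
/- Let Z be a complex symmetric N×N matrix with positive definite imaginary part and S = [[A, B], [C, D]] a real symplectic matrix. Then Im Z' is positive definite, where Z' = (C + DZ)(A + BZ)^{-1}; in fact Im Z = (A + BZ)^H (Im Z') (A + BZ). -/
open Matrix
open scoped ComplexOrder

/-! With `M = A + BZ` and `P = C + DZ`, the symplectic relations `AᵀC = CᵀA`, `BᵀD = DᵀB`,
`AᵀD - CᵀB = 1` make the sesquilinear combination `Mᴴ P - Pᴴ M` collapse to `Z - Zᴴ`, and the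
bilinear one `Pᵀ M - Mᵀ P` to `Zᵀ - Z = 0`. The second makes `Z' = P M⁻¹` symmetric, so that
`2i Im Z' = Z' - Z'ᴴ`, and the first gives `Mᴴ (Z' - Z'ᴴ) M = Z - Zᴴ`. Congruence by the
invertible `M` preserves positive definiteness. -/

theorem star_add_mul_mul_sub_star_mul {R : Type*} [Ring R] [StarRing R] {a b c d : R}
    (hac : star a * c = star c * a) (hbd : star b * d = star d * b)
    (had : star a * d - star c * b = 1) (z : R) :
    star (a + b * z) * (c + d * z) - star (c + d * z) * (a + b * z) = z - star z := by
  have hbc : star b * c - star d * a = -1 := by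
    rw [← neg_sub, ← star_one, ← had]; simp
  calc star (a + b * z) * (c + d * z) - star (c + d * z) * (a + b * z)
      = (star a * c - star c * a) + (star a * d - star c * b) * z
          + star z * (star b * c - star d * a) + star z * ((star b * d - star d * b) * z) := by
        simp only [star_add, star_mul]; noncomm_ring
    _ = z - star z := by rw [hac, hbd, had, hbc]; noncomm_ring

theorem SymplecticGroup.mem_iff_neg_J {l R : Type*} [Fintype l] [DecidableEq l] [CommRing R]
    {S : Matrix (l ⊕ l) (l ⊕ l) R} :
    S ∈ symplecticGroup l R ↔ S * fromBlocks 0 1 (-1) 0 * Sᵀ = fromBlocks 0 1 (-1) 0 := by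
  have hJ : fromBlocks (0 : Matrix l l R) 1 (-1) 0 = -J l R := by simp [J, fromBlocks_neg]
  rw [SymplecticGroup.mem_iff, hJ, Matrix.mul_neg, Matrix.neg_mul, neg_inj]

theorem SymplecticGroup.fromBlocks_map_ofReal_mem {l : Type*} [Fintype l] [DecidableEq l]
    {A B C D : Matrix l l ℝ} (h : fromBlocks A B C D ∈ symplecticGroup l ℝ) :
    fromBlocks (A.map Complex.ofReal) (B.map Complex.ofReal) (C.map Complex.ofReal)
      (D.map Complex.ofReal) ∈ symplecticGroup l ℂ := by
  have := SymplecticGroup.map_mem h Complex.ofRealHom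
  rwa [fromBlocks_map] at this

namespace Matrix

theorem map_starRingEnd_eq_conjTranspose_of_transpose_eq {n α : Type*} [CommSemiring α]
    [StarRing α] {Z : Matrix n n α} (hZ : Zᵀ = Z) :
    Z.map (starRingEnd α) = Zᴴ := by
  rw [conjTranspose, hZ]; rfl

theorem conjTranspose_map_ofReal {m n : Type*} (A : Matrix m n ℝ) :
    (A.map Complex.ofReal)ᴴ = (A.map Complex.ofReal)ᵀ := by
  ext; simp

variable {n α : Type*} [Fintype n] [DecidableEq n] [CommRing α]

theorem transpose_add_mul_mul_comm {a b c d z : Matrix n n α} (hz : zᵀ = z)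
    (hac : aᵀ * c = cᵀ * a) (hbd : bᵀ * d = dᵀ * b) (had : aᵀ * d - cᵀ * b = 1) :
    (c + d * z)ᵀ * (a + b * z) = (a + b * z)ᵀ * (c + d * z) := by
  have hbc : bᵀ * c - dᵀ * a = -1 := by
    rw [← neg_sub, ← transpose_one, ← had]; simp
  rw [← sub_eq_zero]
  calc (c + d * z)ᵀ * (a + b * z) - (a + b * z)ᵀ * (c + d * z)
      = -(aᵀ * c - cᵀ * a) - (aᵀ * d - cᵀ * b) * z
          - zᵀ * (bᵀ * c - dᵀ * a) - zᵀ * ((bᵀ * d - dᵀ * b) * z) := by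
        simp only [transpose_add, transpose_mul]; noncomm_ring
    _ = 0 := by rw [hac, hbd, had, hbc, hz]; noncomm_ring

theorem transpose_mul_nonsing_inv_of_transpose_mul_comm {M P : Matrix n n α} (hM : IsUnit M)
    (h : Pᵀ * M = Mᵀ * P) : (P * M⁻¹)ᵀ = P * M⁻¹ := by
  have hdet : IsUnit M.det := (isUnit_iff_isUnit_det M).1 hM
  have hdetT : IsUnit Mᵀ.det := by rwa [det_transpose]
  calc (P * M⁻¹)ᵀ = Mᵀ⁻¹ * (Pᵀ * M) * M⁻¹ := by
        rw [transpose_mul, transpose_nonsing_inv, Matrix.mul_assoc,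
          mul_nonsing_inv_cancel_right _ _ hdet]
    _ = P * M⁻¹ := by rw [h, nonsing_inv_mul_cancel_left _ _ hdetT]

theorem conjTranspose_mul_sub_mul_nonsing_inv [StarRing α] {M : Matrix n n α} (hM : IsUnit M)
    (P : Matrix n n α) : Mᴴ * (P * M⁻¹ - (P * M⁻¹)ᴴ) * M = Mᴴ * P - Pᴴ * M := by
  have hdet : IsUnit M.det := (isUnit_iff_isUnit_det M).1 hM
  have hdetH : IsUnit Mᴴ.det := by rw [det_conjTranspose]; exact hdet.star
  rw [conjTranspose_mul, conjTranspose_nonsing_inv, Matrix.mul_sub, Matrix.sub_mul,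
    ← Matrix.mul_assoc Mᴴ, ← Matrix.mul_assoc Mᴴ, mul_nonsing_inv _ hdetH, Matrix.one_mul,
    nonsing_inv_mul_cancel_right _ _ hdet]

end Matrix

theorem moebius_image_posdef_im {N : ℕ} (Z : Matrix (Fin N) (Fin N) ℂ) (hZsymm : Zᵀ = Z)
    (hImZ : ((2 * Complex.I)⁻¹ • (Z - Z.map (starRingEnd ℂ))).PosDef)
    (A B C D : Matrix (Fin N) (Fin N) ℝ)
    (hS : fromBlocks A B C D * fromBlocks (0 : Matrix (Fin N) (Fin N) ℝ) 1 (-1) 0 *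
        (fromBlocks A B C D)ᵀ = fromBlocks 0 1 (-1) 0)
    (hInv : IsUnit (A.map Complex.ofReal + B.map Complex.ofReal * Z)) :
    let Z' := (C.map Complex.ofReal + D.map Complex.ofReal * Z) *
      (A.map Complex.ofReal + B.map Complex.ofReal * Z)⁻¹
    ((2 * Complex.I)⁻¹ • (Z' - Z'.map (starRingEnd ℂ))).PosDef ∧
      (2 * Complex.I)⁻¹ • (Z - Z.map (starRingEnd ℂ)) =
        (A.map Complex.ofReal + B.map Complex.ofReal * Z)ᴴ *
          ((2 * Complex.I)⁻¹ • (Z' - Z'.map (starRingEnd ℂ))) *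
          (A.map Complex.ofReal + B.map Complex.ofReal * Z) := by
  intro Z'
  set M := A.map Complex.ofReal + B.map Complex.ofReal * Z
  obtain ⟨hAC, hBD, hAD⟩ := SymplecticGroup.fromBlocks_mem_iff.1
    (SymplecticGroup.fromBlocks_map_ofReal_mem (SymplecticGroup.mem_iff_neg_J.2 hS))
  have hZ'symm : Z'ᵀ = Z' := transpose_mul_nonsing_inv_of_transpose_mul_comm hInv
    (transpose_add_mul_mul_comm hZsymm hAC hBD hAD)
  simp only [← conjTranspose_map_ofReal, ← star_eq_conjTranspose] at hAC hBD hAD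
  have hdiff := star_add_mul_mul_sub_star_mul hAC hBD hAD Z
  simp only [star_eq_conjTranspose] at hdiff
  have hIm : (2 * Complex.I)⁻¹ • (Z - Zᴴ) = Mᴴ * ((2 * Complex.I)⁻¹ • (Z' - Z'ᴴ)) * M := by
    rw [Matrix.mul_smul, Matrix.smul_mul, conjTranspose_mul_sub_mul_nonsing_inv hInv, hdiff]
  rw [map_starRingEnd_eq_conjTranspose_of_transpose_eq hZsymm] at hImZ ⊢
  rw [map_starRingEnd_eq_conjTranspose_of_transpose_eq hZ'symm]
  exact ⟨(IsUnit.posDef_star_left_conjugate_iff hInv).1 (hIm ▸ hImZ), hIm⟩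
end

section
/- Let Z = V + iU with U symmetric positive definite and V symmetric, and let Σ = (1/2)[[U^{-1}, U^{-1}V], [VU^{-1}, U + VU^{-1}V]]. Then 2Σ is symplectic and Σ is positive definite. -/
/-!
With `P = [[1, 0], [V, 1]]` one has `2Σ = P · diag(U⁻¹, U) · Pᵀ`. Both `P` (as `V` is symmetric)
and `diag(U⁻¹, U)` (as `U` is symmetric) are symplectic, hence so is `2Σ`; and `2Σ` is a
congruence transform of the positive definite `diag(U⁻¹, U)` by the invertible `P`.
-/

open Matrix

namespace Matrix

theorem PosDef.fromBlocks_zero {m n R : Type*} [Fintype m] [Fintype n] [Ring R] [PartialOrder R]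
    [StarRing R] [IsOrderedAddMonoid R] {A : Matrix m m R} {D : Matrix n n R}
    (hA : A.PosDef) (hD : D.PosDef) : (fromBlocks A 0 0 D).PosDef := by
  refine .of_dotProduct_mulVec_pos (hA.isHermitian.fromBlocks (by simp) hD.isHermitian)
    fun x hx => ?_
  rw [fromBlocks_mulVec, dotProduct_block]
  simp only [Matrix.zero_mulVec, add_zero, zero_add, Sum.elim_comp_inl, Sum.elim_comp_inr]
  have hx' : x ∘ Sum.inl ≠ 0 ∨ x ∘ Sum.inr ≠ 0 := by
    by_contra! h
    exact hx (funext (Sum.rec (congrFun h.1) (congrFun h.2)))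
  rcases hx' with h | h
  · exact add_pos_of_pos_of_nonneg (hA.dotProduct_mulVec_pos h)
      (hD.posSemidef.dotProduct_mulVec_nonneg _)
  · exact add_pos_of_nonneg_of_pos (hA.posSemidef.dotProduct_mulVec_nonneg _)
      (hD.dotProduct_mulVec_pos h)

section Symplectic

variable {l R : Type*} [DecidableEq l] [Fintype l] [CommRing R]

theorem fromBlocks_one_zero_mem_symplecticGroup {V : Matrix l l R} (hV : Vᵀ = V) :
    fromBlocks 1 0 V 1 ∈ symplecticGroup l R :=
  SymplecticGroup.fromBlocks_mem_iff.2 ⟨by simp [hV], by simp, by simp⟩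

theorem fromBlocks_inv_zero_zero_transpose_mem_symplecticGroup {A : Matrix l l R}
    (hA : IsUnit A.det) : fromBlocks A⁻¹ 0 0 Aᵀ ∈ symplecticGroup l R :=
  SymplecticGroup.fromBlocks_mem_iff.2
    ⟨by simp, by simp, by rw [← transpose_mul, mul_nonsing_inv A hA]; simp⟩

theorem fromBlocks_one_zero_mul_fromBlocks_diag_mul_transpose (A B V : Matrix l l R) :
    fromBlocks 1 0 V 1 * fromBlocks A 0 0 B * (fromBlocks 1 0 V 1)ᵀ =
      fromBlocks A (A * Vᵀ) (V * A) (B + V * A * Vᵀ) := by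
  simp [fromBlocks_transpose, fromBlocks_multiply, add_comm]

end Symplectic

end Matrix

theorem sigmaZ_symplectic_and_posdef_general {N : ℕ} (U V : Matrix (Fin N) (Fin N) ℝ)
    (hU : U.PosDef) (hVsymm : Vᵀ = V)
    (Sig : Matrix (Fin N ⊕ Fin N) (Fin N ⊕ Fin N) ℝ)
    (hSig : Sig = (1/2 : ℝ) • fromBlocks U⁻¹ (U⁻¹ * V) (V * U⁻¹) (U + V * U⁻¹ * V)) :
    ((2:ℝ) • Sig) * fromBlocks (0 : Matrix (Fin N) (Fin N) ℝ) 1 (-1) 0 * ((2:ℝ) • Sig)ᵀ =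
        fromBlocks 0 1 (-1) 0 ∧
      Sig.PosDef := by
  set P : Matrix (Fin N ⊕ Fin N) (Fin N ⊕ Fin N) ℝ := fromBlocks 1 0 V 1
  have hUsymm : Uᵀ = U := by simpa using hU.isHermitian.eq
  have hP : P ∈ symplecticGroup (Fin N) ℝ := fromBlocks_one_zero_mem_symplecticGroup hVsymm
  have hD : fromBlocks U⁻¹ 0 0 U ∈ symplecticGroup (Fin N) ℝ := by
    simpa [hUsymm] using
      fromBlocks_inv_zero_zero_transpose_mem_symplecticGroup hU.det_pos.ne'.isUnit
  have h2Sig : (2 : ℝ) • Sig = P * fromBlocks U⁻¹ 0 0 U * Pᵀ := by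
    rw [fromBlocks_one_zero_mul_fromBlocks_diag_mul_transpose, hVsymm, hSig, smul_smul]
    norm_num
  constructor
  · -- Mathlib's `J` is the negative of the paper's `Ω`.
    have hΩ : fromBlocks (0 : Matrix (Fin N) (Fin N) ℝ) 1 (-1) 0 = -J (Fin N) ℝ := by
      simp [J, fromBlocks_neg]
    have h2SigSymp := SymplecticGroup.mem_iff.1 <|
      mul_mem (mul_mem hP hD) (SymplecticGroup.transpose_mem hP)
    rw [hΩ, h2Sig, Matrix.mul_neg, Matrix.neg_mul, h2SigSymp]
  · have hPinj : Function.Injective P.vecMul :=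
      vecMul_injective_iff_isUnit.2 <| (isUnit_iff_isUnit_det P).2 <|
        SymplecticGroup.symplectic_det hP
    have h2SigPos : ((2 : ℝ) • Sig).PosDef := by
      rw [h2Sig, ← conjTranspose_eq_transpose_of_trivial]
      exact (hU.inv.fromBlocks_zero hU).mul_mul_conjTranspose_same hPinj
    simpa [smul_smul] using h2SigPos.smul (a := (1/2 : ℝ)) (by norm_num)

theorem sigmaZ_symplectic_and_posdef {N : ℕ} (U V : Matrix (Fin N) (Fin N) ℝ)
    (hU : U.PosDef) (hUsymm : Uᵀ = U) (hVsymm : Vᵀ = V)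
    (Sig : Matrix (Fin N ⊕ Fin N) (Fin N ⊕ Fin N) ℝ)
    (hSig : Sig = (1/2 : ℝ) • fromBlocks U⁻¹ (U⁻¹ * V) (V * U⁻¹) (U + V * U⁻¹ * V)) :
    ((2:ℝ) • Sig) * fromBlocks (0 : Matrix (Fin N) (Fin N) ℝ) 1 (-1) 0 * ((2:ℝ) • Sig)ᵀ =
        fromBlocks 0 1 (-1) 0 ∧
      Sig.PosDef :=
  sigmaZ_symplectic_and_posdef_general U V hU hVsymm Sig hSig
end

section
/- For the local symplectic transformation S_LG = [[a, b], [c, d]] (ad - bc = 1) applied to the first mode of an N-mode Gaussian graph Z = [[t, rᵀ], [r, W]] (t ∈ ℂ, r ∈ ℂ^{N-1}, W complex symmetric), the transformed graph is Z' = [[(c+dt)/(a+bt), rᵀ/(a+bt)], [r/(a+bt), W - b r rᵀ/(a+bt)]], provided a + bt ≠ 0. -/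
/-!
In the embedded blocks, `Ã + B̃Z` is block upper triangular with diagonal `(a + bt, 1)`, so it is
invertible since `a + bt ≠ 0`. Instead of inverting it, one checks `C̃ + D̃Z = Z' (Ã + B̃Z)`
blockwise; the only nontrivial block is the off-diagonal one, where the identity reduces to
`b (c + dt) + 1 = d (a + bt)`, i.e. to `ad - bc = 1`.
-/

open Matrix

section LocalGraphRule

variable {K : Type*} [Field K] {u ι : Type*} [Fintype u] [DecidableEq u] [Fintype ι]

theorem fromBlocks_smul_one_add_mul (x y t : K) (P Q : Matrix ι ι K) (R : Matrix u ι K)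
    (S : Matrix ι u K) (W : Matrix ι ι K) :
    fromBlocks (x • 1) 0 0 P + fromBlocks (y • 1) 0 0 Q * fromBlocks (t • 1) R S W =
      fromBlocks ((x + y * t) • 1) (y • R) (Q * S) (P + Q * W) := by
  simp only [fromBlocks_multiply, fromBlocks_add, Matrix.smul_mul, Matrix.one_mul,
    Matrix.zero_mul, add_zero, zero_add, smul_smul, add_smul]

variable [DecidableEq ι]

theorem isUnit_det_fromBlocks_smul_one (k : K) (hk : k ≠ 0) (B : Matrix Unit ι K) :
    IsUnit (fromBlocks (k • (1 : Matrix Unit Unit K)) B 0 1).det := by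
  simpa [det_fromBlocks_zero₂₁, det_unique] using hk

theorem mul_div_add_inv_of_det_eq_one {a b c d t : K} (hdet : a * d - b * c = 1)
    (hden : a + b * t ≠ 0) : b * ((c + d * t) / (a + b * t)) + (a + b * t)⁻¹ = d := by
  rw [inv_eq_one_div, mul_div_assoc', ← add_div, div_eq_iff hden]
  linear_combination -hdet

theorem local_graph_transform (a b c d t : K) (hdet : a * d - b * c = 1)
    (hden : a + b * t ≠ 0) (r : Matrix ι Unit K) (W : Matrix ι ι K) :
    let Z := fromBlocks (t • (1 : Matrix Unit Unit K)) rᵀ r W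
    (fromBlocks (c • 1) 0 0 0 + fromBlocks (d • 1) 0 0 1 * Z) *
        (fromBlocks (a • 1) 0 0 1 + fromBlocks (b • 1) 0 0 0 * Z)⁻¹ =
      fromBlocks (((c + d * t) / (a + b * t)) • 1) ((a + b * t)⁻¹ • rᵀ) ((a + b * t)⁻¹ • r)
        (W - (b / (a + b * t)) • (r * rᵀ)) := by
  intro Z
  simp only [Z, fromBlocks_smul_one_add_mul, Matrix.one_mul, Matrix.zero_mul, add_zero]
  have := invertibleOfIsUnitDet _ (isUnit_det_fromBlocks_smul_one _ hden (b • rᵀ))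
  rw [mul_inv_eq_iff_eq_mul_of_invertible, fromBlocks_multiply]
  simp only [Matrix.smul_mul, Matrix.mul_smul, Matrix.one_mul, Matrix.mul_one,
    Matrix.mul_zero, add_zero, zero_add, smul_smul]
  rw [← add_smul, mul_div_add_inv_of_det_eq_one hdet hden, mul_div_cancel₀ _ hden,
    mul_inv_cancel₀ hden, one_smul, ← div_eq_mul_inv, add_sub_cancel]

end LocalGraphRule

theorem local_gaussian_graph_rule_general {m : ℕ} (a b c d : ℝ) (hdet : a * d - b * c = 1)
    (t : ℂ) (r : Matrix (Fin m) Unit ℂ) (W : Matrix (Fin m) (Fin m) ℂ)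
    (hden : (a : ℂ) + b * t ≠ 0) :
    let T : Matrix Unit Unit ℂ := Matrix.of fun _ _ => t
    let Z : Matrix (Unit ⊕ Fin m) (Unit ⊕ Fin m) ℂ := fromBlocks T rᵀ r W
    let Atil : Matrix (Unit ⊕ Fin m) (Unit ⊕ Fin m) ℂ :=
      fromBlocks ((a : ℂ) • (1 : Matrix Unit Unit ℂ)) 0 0 1
    let Btil : Matrix (Unit ⊕ Fin m) (Unit ⊕ Fin m) ℂ :=
      fromBlocks ((b : ℂ) • (1 : Matrix Unit Unit ℂ)) 0 0 0
    let Ctil : Matrix (Unit ⊕ Fin m) (Unit ⊕ Fin m) ℂ :=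
      fromBlocks ((c : ℂ) • (1 : Matrix Unit Unit ℂ)) 0 0 0
    let Dtil : Matrix (Unit ⊕ Fin m) (Unit ⊕ Fin m) ℂ :=
      fromBlocks ((d : ℂ) • (1 : Matrix Unit Unit ℂ)) 0 0 1
    (Ctil + Dtil * Z) * (Atil + Btil * Z)⁻¹ =
      fromBlocks ((((c : ℂ) + d * t) / ((a : ℂ) + b * t)) • (1 : Matrix Unit Unit ℂ))
        (((a : ℂ) + b * t)⁻¹ • rᵀ) (((a : ℂ) + b * t)⁻¹ • r)
        (W - ((b : ℂ) / ((a : ℂ) + b * t)) • (r * rᵀ)) := by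
  intro T Z Atil Btil Ctil Dtil
  have hT : T = t • 1 := by
    ext i j
    simp [T, Subsingleton.elim i j]
  have hdetC : (a : ℂ) * d - b * c = 1 := by exact_mod_cast hdet
  simpa only [Z, hT] using local_graph_transform (a : ℂ) b c d t hdetC hden r W

theorem local_gaussian_graph_rule {m : ℕ} (a b c d : ℝ) (hdet : a * d - b * c = 1)
    (t : ℂ) (r : Matrix (Fin m) Unit ℂ) (W : Matrix (Fin m) (Fin m) ℂ) (hWsymm : Wᵀ = W)
    (hden : (a : ℂ) + b * t ≠ 0) :
    let T : Matrix Unit Unit ℂ := Matrix.of fun _ _ => t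
    let Z : Matrix (Unit ⊕ Fin m) (Unit ⊕ Fin m) ℂ := fromBlocks T rᵀ r W
    let Atil : Matrix (Unit ⊕ Fin m) (Unit ⊕ Fin m) ℂ :=
      fromBlocks ((a : ℂ) • (1 : Matrix Unit Unit ℂ)) 0 0 1
    let Btil : Matrix (Unit ⊕ Fin m) (Unit ⊕ Fin m) ℂ :=
      fromBlocks ((b : ℂ) • (1 : Matrix Unit Unit ℂ)) 0 0 0
    let Ctil : Matrix (Unit ⊕ Fin m) (Unit ⊕ Fin m) ℂ :=
      fromBlocks ((c : ℂ) • (1 : Matrix Unit Unit ℂ)) 0 0 0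
    let Dtil : Matrix (Unit ⊕ Fin m) (Unit ⊕ Fin m) ℂ :=
      fromBlocks ((d : ℂ) • (1 : Matrix Unit Unit ℂ)) 0 0 1
    (Ctil + Dtil * Z) * (Atil + Btil * Z)⁻¹ =
      fromBlocks ((((c : ℂ) + d * t) / ((a : ℂ) + b * t)) • (1 : Matrix Unit Unit ℂ))
        (((a : ℂ) + b * t)⁻¹ • rᵀ) (((a : ℂ) + b * t)⁻¹ • r)
        (W - ((b : ℂ) / ((a : ℂ) + b * t)) • (r * rᵀ)) :=
  local_gaussian_graph_rule_general a b c d hdet t r W hden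
end

section
/- For an n-local symplectic operation S_{n-local} = [[A,B],[C,D]] acting on the first n modes of an (n+p)-mode graph Z = [[T, Rᵀ],[R, W]], and with J = (A + BT)^{-1}, the transformed graph is Z' = [[(C+DT)J, Jᵀ Rᵀ], [RJ, W - RJB Rᵀ]]. In particular, the off-diagonal consistency -(C+DT)JB Rᵀ + DRᵀ = Jᵀ Rᵀ holds. -/
/-!
The enlarged denominator `[[A + B T, B Rᵀ], [0, 1]]` is block upper triangular, so its inverse is
explicit and the transformed graph is computed blockwise; only the upper right block
`D Rᵀ - (C + D T) J B Rᵀ` needs an idea. With `M = A + B T` and `S = C + D T`, symmetry of `S M⁻¹`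
gives `Mᵀ S = Sᵀ M`, and the symplectic relations together with `Tᵀ = T` give `Mᵀ D - Sᵀ B = 1`.
Hence `Mᵀ (D - S M⁻¹ B) = 1`, i.e. `Jᵀ = D - S J B`.
-/

open Matrix

section

variable {m l K : Type*} [Fintype m] [DecidableEq m] [Fintype l] [DecidableEq l] [CommRing K]

theorem linearFractional_fromBlocks_local (A B C D T : Matrix m m K) (Q : Matrix m l K)
    (R : Matrix l m K) (W : Matrix l l K) (hM : IsUnit (A + B * T)) :
    (fromBlocks C 0 0 0 + fromBlocks D 0 0 1 * fromBlocks T Q R W) *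
        (fromBlocks A 0 0 1 + fromBlocks B 0 0 0 * fromBlocks T Q R W)⁻¹ =
      fromBlocks ((C + D * T) * (A + B * T)⁻¹)
        (D * Q - (C + D * T) * (A + B * T)⁻¹ * B * Q)
        (R * (A + B * T)⁻¹) (W - R * (A + B * T)⁻¹ * B * Q) := by
  have hnum : fromBlocks C 0 0 0 + fromBlocks D 0 0 1 * fromBlocks T Q R W =
      fromBlocks (C + D * T) (D * Q) R W := by
    simp [fromBlocks_multiply, fromBlocks_add]
  have hden : fromBlocks A 0 0 1 + fromBlocks B 0 0 0 * fromBlocks T Q R W =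
      fromBlocks (A + B * T) (B * Q) 0 1 := by
    simp [fromBlocks_multiply, fromBlocks_add]
  rw [hnum, hden, inv_fromBlocks_zero₂₁_of_isUnit_iff _ _ _ (iff_of_true hM isUnit_one),
    fromBlocks_multiply]
  simp [Matrix.mul_assoc, sub_eq_add_neg, add_comm]

theorem transpose_mul_comm_of_mul_inv_symm {S M : Matrix m m K} (hM : IsUnit M)
    (h : (S * M⁻¹)ᵀ = S * M⁻¹) : Mᵀ * S = Sᵀ * M := by
  have hM' : IsUnit M.det := (isUnit_iff_isUnit_det M).mp hM
  have hMt : IsUnit Mᵀ.det := by rwa [det_transpose]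
  calc Mᵀ * S = Mᵀ * (S * M⁻¹) * M := by
        rw [Matrix.mul_assoc, nonsing_inv_mul_cancel_right _ _ hM']
    _ = Mᵀ * (Mᵀ⁻¹ * Sᵀ) * M := by rw [← h, transpose_mul, transpose_nonsing_inv]
    _ = Sᵀ * M := by rw [mul_nonsing_inv_cancel_left _ _ hMt]

theorem transpose_add_mul_mul_sub_eq_one {A B C D T : Matrix m m K}
    (h₁ : Aᵀ * D - Cᵀ * B = 1) (h₂ : Dᵀ * B = Bᵀ * D) (hT : Tᵀ = T) :
    (A + B * T)ᵀ * D - (C + D * T)ᵀ * B = 1 := by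
  rw [transpose_add, transpose_add, transpose_mul, transpose_mul, hT, add_mul, add_mul,
    Matrix.mul_assoc, Matrix.mul_assoc, h₂, ← h₁]
  abel

theorem transpose_nonsing_inv_eq_sub {M S B D : Matrix m m K} (hM : IsUnit M)
    (hMS : Mᵀ * S = Sᵀ * M) (h : Mᵀ * D - Sᵀ * B = 1) : M⁻¹ᵀ = D - S * M⁻¹ * B := by
  rw [transpose_nonsing_inv]
  refine inv_eq_right_inv ?_
  rw [Matrix.mul_sub, ← h, Matrix.mul_assoc, ← Matrix.mul_assoc Mᵀ, hMS, Matrix.mul_assoc,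
    mul_nonsing_inv_cancel_left _ _ ((isUnit_iff_isUnit_det M).mp hM)]

end

theorem nlocal_gaussian_graph_rule_general {n p : ℕ} (A B C D : Matrix (Fin n) (Fin n) ℝ)
    (hsymp₁ : Aᵀ * D - Cᵀ * B = 1) (hsymp₂ : Dᵀ * B = Bᵀ * D)
    (T : Matrix (Fin n) (Fin n) ℂ) (hTsymm : Tᵀ = T)
    (R : Matrix (Fin p) (Fin n) ℂ) (W : Matrix (Fin p) (Fin p) ℂ)
    (hInv : IsUnit (A.map Complex.ofReal + B.map Complex.ofReal * T))
    (hZ'symm : ((C.map Complex.ofReal + D.map Complex.ofReal * T) *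
          (A.map Complex.ofReal + B.map Complex.ofReal * T)⁻¹)ᵀ =
        (C.map Complex.ofReal + D.map Complex.ofReal * T) *
          (A.map Complex.ofReal + B.map Complex.ofReal * T)⁻¹) :
    let A' := A.map Complex.ofReal
    let B' := B.map Complex.ofReal
    let C' := C.map Complex.ofReal
    let D' := D.map Complex.ofReal
    let J := (A' + B' * T)⁻¹
    (fromBlocks C' 0 0 0 + fromBlocks D' 0 0 1 * fromBlocks T Rᵀ R W) *
          (fromBlocks A' 0 0 1 + fromBlocks B' 0 0 0 * fromBlocks T Rᵀ R W)⁻¹ =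
        fromBlocks ((C' + D' * T) * J) (Jᵀ * Rᵀ) (R * J) (W - R * J * B' * Rᵀ) ∧
      -((C' + D' * T) * J * B' * Rᵀ) + D' * Rᵀ = Jᵀ * Rᵀ := by
  intro A' B' C' D' J
  have h₁ : A'ᵀ * D' - C'ᵀ * B' = 1 := by
    have h := congrArg Complex.ofRealHom.mapMatrix hsymp₁
    rwa [map_sub, map_mul, map_mul, map_one] at h
  have h₂ : D'ᵀ * B' = B'ᵀ * D' := by
    have h := congrArg Complex.ofRealHom.mapMatrix hsymp₂
    rwa [map_mul, map_mul] at h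
  have hJ : Jᵀ = D' - (C' + D' * T) * J * B' :=
    transpose_nonsing_inv_eq_sub hInv (transpose_mul_comm_of_mul_inv_symm hInv hZ'symm)
      (transpose_add_mul_mul_sub_eq_one h₁ h₂ hTsymm)
  have hoff : -((C' + D' * T) * J * B' * Rᵀ) + D' * Rᵀ = Jᵀ * Rᵀ := by
    rw [hJ, Matrix.sub_mul, neg_add_eq_sub]
  refine ⟨?_, hoff⟩
  rw [linearFractional_fromBlocks_local A' B' C' D' T Rᵀ R W hInv, ← hoff, neg_add_eq_sub]

theorem nlocal_gaussian_graph_rule {n p : ℕ} (A B C D : Matrix (Fin n) (Fin n) ℝ)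
    (hsymp₁ : Aᵀ * D - Cᵀ * B = 1) (hsymp₂ : Dᵀ * B = Bᵀ * D)
    (T : Matrix (Fin n) (Fin n) ℂ) (hTsymm : Tᵀ = T)
    (R : Matrix (Fin p) (Fin n) ℂ) (W : Matrix (Fin p) (Fin p) ℂ) (hWsymm : Wᵀ = W)
    (hInv : IsUnit (A.map Complex.ofReal + B.map Complex.ofReal * T))
    (hZ'symm : ((C.map Complex.ofReal + D.map Complex.ofReal * T) *
          (A.map Complex.ofReal + B.map Complex.ofReal * T)⁻¹)ᵀ =
        (C.map Complex.ofReal + D.map Complex.ofReal * T) *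
          (A.map Complex.ofReal + B.map Complex.ofReal * T)⁻¹) :
    let A' := A.map Complex.ofReal
    let B' := B.map Complex.ofReal
    let C' := C.map Complex.ofReal
    let D' := D.map Complex.ofReal
    let J := (A' + B' * T)⁻¹
    (fromBlocks C' 0 0 0 + fromBlocks D' 0 0 1 * fromBlocks T Rᵀ R W) *
          (fromBlocks A' 0 0 1 + fromBlocks B' 0 0 0 * fromBlocks T Rᵀ R W)⁻¹ =
        fromBlocks ((C' + D' * T) * J) (Jᵀ * Rᵀ) (R * J) (W - R * J * B' * Rᵀ) ∧
      -((C' + D' * T) * J * B' * Rᵀ) + D' * Rᵀ = Jᵀ * Rᵀ :=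
  nlocal_gaussian_graph_rule_general A B C D hsymp₁ hsymp₂ T hTsymm R W hInv hZ'symm
end

section
/- For the two-mode squeezed graph Z₁' = [[i sech 2α, tanh 2α],[tanh 2α, i sech 2α]] with U = Im Z₁' and V = Re Z₁', the efficiency conditions (U + VU^{-1}V - U^{-1})_{jj} = 0 and (VU^{-1})_{jj} = 0 hold for j = 1, 2. -/
/-! Since `U` is scalar and the off-diagonal swap matrix squares to `1`, `V * U⁻¹` is a multiple of
the swap (zero diagonal) and `U + V * U⁻¹ * V - U⁻¹` is the scalar `(sech² + tanh² - 1) / sech = 0`. -/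

open Matrix

theorem Matrix.inv_smul_one {n K : Type*} [Fintype n] [DecidableEq n] [Field K] {u : K}
    (hu : u ≠ 0) : (u • (1 : Matrix n n K))⁻¹ = u⁻¹ • 1 :=
  inv_eq_right_inv <| by rw [smul_mul_smul_comm, mul_one, mul_inv_cancel₀ hu, one_smul]

theorem Matrix.swap_mul_swap {R : Type*} [Semiring R] :
    (!![0, 1; 1, 0] : Matrix (Fin 2) (Fin 2) R) * !![0, 1; 1, 0] = 1 := by
  ext i j; fin_cases i <;> fin_cases j <;> simp [mul_apply, Fin.sum_univ_two]

theorem Matrix.swap_apply_self {R : Type*} [Zero R] [One R] (j : Fin 2) :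
    (!![0, 1; 1, 0] : Matrix (Fin 2) (Fin 2) R) j j = 0 := by
  fin_cases j <;> rfl

theorem Real.inv_cosh_sq_add_tanh_sq (x : ℝ) : (cosh x)⁻¹ ^ 2 + tanh x ^ 2 = 1 := by
  have hc : cosh x ≠ 0 := (cosh_pos x).ne'
  rw [tanh_eq_sinh_div_cosh, div_pow, inv_pow, ← one_div, ← add_div,
    div_eq_one_iff_eq (pow_ne_zero 2 hc)]
  linarith [cosh_sq_sub_sinh_sq x]

section ScalarSwap

variable {K : Type*} [Field K] {u : K} (v : K)

theorem smul_swap_mul_inv_smul_one (hu : u ≠ 0) :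
    v • !![0, 1; 1, 0] * (u • (1 : Matrix (Fin 2) (Fin 2) K))⁻¹ = (v / u) • !![0, 1; 1, 0] := by
  rw [inv_smul_one hu, smul_mul_smul_comm, mul_one, div_eq_mul_inv]

theorem smul_one_add_swap_conj_sub_inv (hu : u ≠ 0) :
    let U : Matrix (Fin 2) (Fin 2) K := u • 1
    let V : Matrix (Fin 2) (Fin 2) K := v • !![0, 1; 1, 0]
    U + V * U⁻¹ * V - U⁻¹ = ((u ^ 2 + v ^ 2 - 1) / u) • 1 := by
  intro U V
  rw [smul_swap_mul_inv_smul_one v hu, smul_mul_smul_comm, swap_mul_swap, inv_smul_one hu,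
    ← add_smul, ← sub_smul]
  congr 1
  field_simp

end ScalarSwap

theorem two_mode_cluster_efficiency_general (α : ℝ) :
    let U : Matrix (Fin 2) (Fin 2) ℝ := (Real.cosh (2 * α))⁻¹ • 1
    let V : Matrix (Fin 2) (Fin 2) ℝ := Real.tanh (2 * α) • !![0, 1; 1, 0]
    ∀ j : Fin 2, (U + V * U⁻¹ * V - U⁻¹) j j = 0 ∧ (V * U⁻¹) j j = 0 := by
  intro U V j
  have hs : (Real.cosh (2 * α))⁻¹ ≠ 0 := inv_ne_zero (Real.cosh_pos _).ne'
  refine ⟨?_, ?_⟩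
  · rw [smul_one_add_swap_conj_sub_inv _ hs, Real.inv_cosh_sq_add_tanh_sq, sub_self, zero_div,
      zero_smul, Matrix.zero_apply]
  · rw [smul_swap_mul_inv_smul_one _ hs, Matrix.smul_apply, swap_apply_self, smul_zero]

theorem two_mode_cluster_efficiency (α : ℝ) (hα : 0 < α) :
    let U : Matrix (Fin 2) (Fin 2) ℝ := (Real.cosh (2 * α))⁻¹ • 1
    let V : Matrix (Fin 2) (Fin 2) ℝ := Real.tanh (2 * α) • !![0, 1; 1, 0]
    ∀ j : Fin 2, (U + V * U⁻¹ * V - U⁻¹) j j = 0 ∧ (V * U⁻¹) j j = 0 :=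
  two_mode_cluster_efficiency_general α
end

section
/- If G is self-inverse (G² = I) and bipartite with blocks G = [[0, G₀ᵀ],[G₀, 0]] where G₀ᵀG₀ = G₀G₀ᵀ = I, then applying the Fourier Möbius transformation to the first block of nodes of Z = i cosh(2α) I - i sinh(2α) G yields Z' = i sech(2α) I + tanh(2α) G. -/
/-!
The Fourier transform on the first block is a partial inversion: it sends
`[[P, Q], [S, T]]` to `[[-P⁻¹, -P⁻¹Q], [-SP⁻¹, T - SP⁻¹Q]]`. For `Z = a • 1 + b • G` with
`G = [[0, G₀ᵀ], [G₀, 0]]` and `G₀G₀ᵀ = 1` this is `-a⁻¹ • 1 - (b / a) • G`, except that the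
Schur complement in the lower corner is `a - b² / a`; it agrees with `-a⁻¹` exactly when
`a² - b² = -1`, which for `a = i cosh 2α`, `b = -i sinh 2α` is `cosh² - sinh² = 1`.
-/

open Matrix

namespace Matrix

variable {n m R : Type*} [DecidableEq n] [DecidableEq m]

theorem smul_one_add_smul_fromBlocks_zero [Ring R] (x y : R) (g : Matrix m n R)
    (gT : Matrix n m R) :
    x • (1 : Matrix (n ⊕ m) (n ⊕ m) R) + y • fromBlocks 0 gT g 0 =
      fromBlocks (x • 1) (y • gT) (y • g) (x • 1) := by
  rw [← fromBlocks_one, fromBlocks_smul, fromBlocks_smul, fromBlocks_add]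
  simp

variable [Fintype n] [Fintype m]

noncomputable def fourierFirstBlock [CommRing R] (Z : Matrix (n ⊕ m) (n ⊕ m) R) :
    Matrix (n ⊕ m) (n ⊕ m) R :=
  (fromBlocks 1 0 0 0 + fromBlocks 0 0 0 1 * Z) * (fromBlocks 0 0 0 1 + fromBlocks (-1) 0 0 0 * Z)⁻¹

theorem fourierFirstBlock_fromBlocks [CommRing R] (P : Matrix n n R) (Q : Matrix n m R)
    (S : Matrix m n R) (T : Matrix m m R) (hP : IsUnit P) :
    fourierFirstBlock (fromBlocks P Q S T) =
      fromBlocks (-P⁻¹) (-(P⁻¹ * Q)) (-(S * P⁻¹)) (T - S * P⁻¹ * Q) := by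
  have hden : fromBlocks 0 0 0 1 + fromBlocks (-1) 0 0 0 * fromBlocks P Q S T =
      fromBlocks (-P) (-Q) 0 (1 : Matrix m m R) := by
    simp [fromBlocks_multiply, fromBlocks_add]
  have hnum : fromBlocks 1 0 0 0 + fromBlocks 0 0 0 1 * fromBlocks P Q S T =
      fromBlocks 1 0 S T := by
    simp [fromBlocks_multiply, fromBlocks_add]
  have hneg : (-P)⁻¹ = -P⁻¹ := inv_eq_left_inv <| by
    rw [neg_mul_neg, nonsing_inv_mul _ ((isUnit_iff_isUnit_det P).1 hP)]
  rw [fourierFirstBlock, hden, hnum,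
    inv_fromBlocks_zero₂₁_of_isUnit_iff _ _ _ (iff_of_true hP.neg isUnit_one),
    fromBlocks_multiply, hneg]
  simp [sub_eq_neg_add, Matrix.mul_assoc]

theorem fourierFirstBlock_smul_one_add_smul_fromBlocks_zero [Field R] {a b : R} (ha : a ≠ 0)
    (hab : a ^ 2 - b ^ 2 = -1) (g : Matrix m n R) (gT : Matrix n m R) (hg : g * gT = 1) :
    fourierFirstBlock (a • 1 + b • fromBlocks 0 gT g 0) =
      (-a⁻¹) • (1 : Matrix (n ⊕ m) (n ⊕ m) R) + (-(b / a)) • fromBlocks 0 gT g 0 := by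
  have hunit : IsUnit (a • 1 : Matrix n n R) := (isUnit_smul_iff (Units.mk0 a ha) 1).2 isUnit_one
  have hinv : (a • 1 : Matrix n n R)⁻¹ = a⁻¹ • 1 :=
    inv_eq_left_inv (by rw [smul_mul_smul, Matrix.one_mul, inv_mul_cancel₀ ha, one_smul])
  have hcorner : a - a⁻¹ * b * b = -a⁻¹ := by
    field_simp
    linear_combination hab
  rw [smul_one_add_smul_fromBlocks_zero, smul_one_add_smul_fromBlocks_zero,
    fourierFirstBlock_fromBlocks _ _ _ _ hunit, hinv]
  simp only [Matrix.smul_mul, Matrix.mul_smul, Matrix.one_mul, Matrix.mul_one, smul_smul, hg,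
    ← sub_smul, hcorner, neg_smul, div_eq_inv_mul, mul_comm b]

end Matrix

theorem bipartite_selfinverse_fourier_rule_general {Nb : ℕ} (G₀ : Matrix (Fin Nb) (Fin Nb) ℝ)
    (hG₀₂ : G₀ * G₀ᵀ = 1) (α : ℝ) :
    let Gc : Matrix (Fin Nb ⊕ Fin Nb) (Fin Nb ⊕ Fin Nb) ℂ :=
      (fromBlocks 0 G₀ᵀ G₀ 0).map Complex.ofReal
    let Z : Matrix (Fin Nb ⊕ Fin Nb) (Fin Nb ⊕ Fin Nb) ℂ :=
      (Complex.I * Real.cosh (2 * α)) • 1 - (Complex.I * Real.sinh (2 * α)) • Gc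
    let A : Matrix (Fin Nb ⊕ Fin Nb) (Fin Nb ⊕ Fin Nb) ℂ :=
      fromBlocks 0 0 0 1
    let B : Matrix (Fin Nb ⊕ Fin Nb) (Fin Nb ⊕ Fin Nb) ℂ :=
      fromBlocks (-(1 : Matrix (Fin Nb) (Fin Nb) ℂ)) 0 0 0
    let C : Matrix (Fin Nb ⊕ Fin Nb) (Fin Nb ⊕ Fin Nb) ℂ :=
      fromBlocks 1 0 0 0
    let D : Matrix (Fin Nb ⊕ Fin Nb) (Fin Nb ⊕ Fin Nb) ℂ :=
      fromBlocks 0 0 0 1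
    (C + D * Z) * (A + B * Z)⁻¹ =
      (Complex.I * ((Real.cosh (2 * α) : ℂ))⁻¹) • 1 + (Real.tanh (2 * α) : ℂ) • Gc := by
  intro Gc Z A B C D
  have hGc : Gc = fromBlocks 0 (G₀ᵀ.map (↑)) (G₀.map (↑)) 0 := by simp [Gc, fromBlocks_map]
  have hG : G₀.map ((↑) : ℝ → ℂ) * G₀ᵀ.map (↑) = 1 := by
    have := congrArg Complex.ofRealHom.mapMatrix hG₀₂
    rwa [map_mul, map_one] at this
  set c : ℂ := (Real.cosh (2 * α) : ℂ)
  set s : ℂ := (Real.sinh (2 * α) : ℂ)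
  have hc : c ≠ 0 := Complex.ofReal_ne_zero.2 (Real.cosh_pos _).ne'
  have hcs : c ^ 2 - s ^ 2 = 1 := by
    simp only [c, s]
    rw [← Complex.ofReal_pow, ← Complex.ofReal_pow, ← Complex.ofReal_sub,
      Real.cosh_sq_sub_sinh_sq, Complex.ofReal_one]
  have hab : (Complex.I * c) ^ 2 - (-(Complex.I * s)) ^ 2 = -1 := by
    linear_combination (c ^ 2 - s ^ 2) * Complex.I_sq - hcs
  have hZ : Z = (Complex.I * c) • 1 + (-(Complex.I * s)) • Gc := by
    rw [neg_smul, ← sub_eq_add_neg]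
  show fourierFirstBlock Z = _
  rw [hZ, hGc, fourierFirstBlock_smul_one_add_smul_fromBlocks_zero
    (mul_ne_zero Complex.I_ne_zero hc) hab _ _ hG]
  congr 2
  · rw [mul_inv, Complex.inv_I, neg_mul, neg_neg]
  · rw [neg_div, neg_neg, mul_div_mul_left _ _ Complex.I_ne_zero, Real.tanh_eq_sinh_div_cosh,
      Complex.ofReal_div]

theorem bipartite_selfinverse_fourier_rule {Nb : ℕ} (G₀ : Matrix (Fin Nb) (Fin Nb) ℝ)
    (hG₀₁ : G₀ᵀ * G₀ = 1) (hG₀₂ : G₀ * G₀ᵀ = 1) (α : ℝ) (hα : 0 < α) :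
    let Gc : Matrix (Fin Nb ⊕ Fin Nb) (Fin Nb ⊕ Fin Nb) ℂ :=
      (fromBlocks 0 G₀ᵀ G₀ 0).map Complex.ofReal
    let Z : Matrix (Fin Nb ⊕ Fin Nb) (Fin Nb ⊕ Fin Nb) ℂ :=
      (Complex.I * Real.cosh (2 * α)) • 1 - (Complex.I * Real.sinh (2 * α)) • Gc
    let A : Matrix (Fin Nb ⊕ Fin Nb) (Fin Nb ⊕ Fin Nb) ℂ :=
      fromBlocks 0 0 0 1
    let B : Matrix (Fin Nb ⊕ Fin Nb) (Fin Nb ⊕ Fin Nb) ℂ :=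
      fromBlocks (-(1 : Matrix (Fin Nb) (Fin Nb) ℂ)) 0 0 0
    let C : Matrix (Fin Nb ⊕ Fin Nb) (Fin Nb ⊕ Fin Nb) ℂ :=
      fromBlocks 1 0 0 0
    let D : Matrix (Fin Nb ⊕ Fin Nb) (Fin Nb ⊕ Fin Nb) ℂ :=
      fromBlocks 0 0 0 1
    (C + D * Z) * (A + B * Z)⁻¹ =
      (Complex.I * ((Real.cosh (2 * α) : ℂ))⁻¹) • 1 + (Real.tanh (2 * α) : ℂ) • Gc :=
  bipartite_selfinverse_fourier_rule_general G₀ hG₀₂ α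
end

section
/- For a bipartite self-inverse G and Z' = i sech(2α) I + tanh(2α) G, the matrix Im[(I + Z'²) ∘ Z'] equals 2 sech(2α) tanh²(2α) (I + G) ∘ (I + G), which is positive semidefinite. -/
/-!
Write `Z' = a + b G` with `a = i sech 2α` and `b = tanh 2α`. Since `G² = 1`,
`1 + Z'² = (1 + a² + b²) + 2ab G`, and since `G` has zero diagonal, Hadamard products of
matrices of the form `x + y G` only see the coefficients:
`(x + y G) ∘ (u + v G) = xu + yv (G ∘ G)`. The identity `1 + a² = b²`, i.e.
`1 - sech² = tanh²`, makes both coefficients of `(1 + Z'²) ∘ Z'` equal to `2ab²`, a purely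
imaginary multiple of `(1 + G) ∘ (1 + G)`. Finally `1 + G = (1 + G)ᵀ(1 + G) / 2` is positive
semidefinite, and so is its Hadamard square by the Schur product theorem.
-/

open Matrix

section Hadamard

variable {n R : Type*} [CommRing R] [DecidableEq n]

theorem smul_one_add_smul_hadamard {G : Matrix n n R} (hG : ∀ i, G i i = 0) (x y u v : R) :
    (x • 1 + y • G) ⊙ (u • 1 + v • G) = (x * u) • 1 + (y * v) • (G ⊙ G) := by
  ext i j
  obtain rfl | hij := eq_or_ne i j
  · simp [hG]
  · simp [one_apply_ne hij, mul_mul_mul_comm]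

variable [Fintype n]

theorem smul_one_add_smul_mul_self {G : Matrix n n R} (hG : G * G = 1) (a b : R) :
    (a • 1 + b • G) * (a • 1 + b • G) = (a ^ 2 + b ^ 2) • 1 + (2 * a * b) • G := by
  simp only [add_mul, mul_add, Matrix.smul_mul, Matrix.mul_smul, one_mul, mul_one, hG,
    smul_smul]
  module

theorem one_add_mul_self_hadamard_eq {G : Matrix n n R} (hGG : G * G = 1) (hG : ∀ i, G i i = 0)
    {a b : R} (hab : 1 + a ^ 2 = b ^ 2) :
    (1 + (a • 1 + b • G) * (a • 1 + b • G)) ⊙ (a • 1 + b • G) =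
      (2 * a * b ^ 2) • ((1 + G) ⊙ (1 + G)) := by
  have hcoef : 1 + a ^ 2 + b ^ 2 = 2 * b ^ 2 := by linear_combination hab
  have hsq :
      1 + (a • 1 + b • G) * (a • 1 + b • G) = (2 * b ^ 2) • 1 + (2 * a * b) • G := by
    rw [smul_one_add_smul_mul_self hGG, ← hcoef]
    module
  have hone : 1 + G = (1 : R) • 1 + (1 : R) • G := by simp only [one_smul]
  rw [hsq, hone, smul_one_add_smul_hadamard hG, smul_one_add_smul_hadamard hG]
  module

end Hadamard

section PosSemidef

open scoped ComplexOrder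

variable {n 𝕜 : Type*} [Fintype n] [DecidableEq n] [RCLike 𝕜]

theorem Matrix.IsHermitian.posSemidef_one_add_of_mul_self_eq_one {G : Matrix n n 𝕜}
    (hG : G.IsHermitian) (hGG : G * G = 1) : (1 + G).PosSemidef := by
  have hgram : (1 + G)ᴴ * (1 + G) = (2 : ℝ) • (1 + G) := by
    rw [conjTranspose_add, conjTranspose_one, hG.eq]
    simp only [add_mul, mul_add, one_mul, mul_one, hGG]
    module
  have h := (posSemidef_conjTranspose_mul_self (1 + G)).smul (show (0 : ℝ) ≤ 2⁻¹ by norm_num)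
  rwa [hgram, smul_smul, inv_mul_cancel₀ two_ne_zero, one_smul] at h

end PosSemidef

theorem Matrix.fromBlocks_zero_mul_self_eq_one {m R : Type*} [Fintype m] [DecidableEq m]
    [Ring R] {B C : Matrix m m R} (hBC : B * C = 1) (hCB : C * B = 1) :
    fromBlocks 0 B C 0 * fromBlocks 0 B C 0 = 1 := by
  simp [fromBlocks_multiply, hBC, hCB, ← fromBlocks_one]

theorem one_add_sq_I_mul_inv_cosh (x : ℝ) :
    1 + (Complex.I * (Real.cosh x : ℂ)⁻¹) ^ 2 = (Real.tanh x : ℂ) ^ 2 := by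
  have hc : (Real.cosh x : ℂ) ≠ 0 := Complex.ofReal_ne_zero.mpr (Real.cosh_pos x).ne'
  rw [Real.tanh_eq_sinh_div_cosh, Complex.ofReal_div]
  field_simp
  have h : (Real.cosh x : ℂ) ^ 2 - (Real.sinh x : ℂ) ^ 2 = 1 := by
    exact_mod_cast Real.cosh_sq_sub_sinh_sq x
  linear_combination h + Complex.I_sq

theorem map_im_one_add_mul_self_hadamard_eq {n : Type*} [Fintype n] [DecidableEq n]
    {G : Matrix n n ℝ} (hGG : G * G = 1) (hG : ∀ i, G i i = 0) (x : ℝ) {Z : Matrix n n ℂ}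
    (hZ : Z = (Complex.I * (Real.cosh x : ℂ)⁻¹) • 1 +
      (Real.tanh x : ℂ) • G.map Complex.ofReal) :
    ((1 + Z * Z) ⊙ Z).map Complex.im =
      (2 * (Real.cosh x)⁻¹ * Real.tanh x ^ 2) • ((1 + G) ⊙ (1 + G)) := by
  have hGc : G.map Complex.ofReal * G.map Complex.ofReal = 1 :=
    (Matrix.map_mul (f := Complex.ofRealHom)).symm.trans (by simp [hGG])
  have hcoef : 2 * (Complex.I * (Real.cosh x : ℂ)⁻¹) * (Real.tanh x : ℂ) ^ 2 =
      ((2 * (Real.cosh x)⁻¹ * Real.tanh x ^ 2 : ℝ) : ℂ) * Complex.I := by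
    push_cast
    ring
  have hone : (1 : Matrix n n ℂ) = (1 : Matrix n n ℝ).map Complex.ofReal :=
    (Matrix.map_one _ Complex.ofReal_zero Complex.ofReal_one).symm
  subst hZ
  rw [one_add_mul_self_hadamard_eq hGc (by simp [hG]) (one_add_sq_I_mul_inv_cosh x), hcoef, hone]
  ext i j
  simp only [map_apply, Matrix.smul_apply, hadamard_apply, Matrix.add_apply, smul_eq_mul,
    ← Complex.ofReal_add, ← Complex.ofReal_mul]
  rw [Complex.im_mul_ofReal, Complex.mul_I_im, Complex.ofReal_re]

theorem bipartite_selfinverse_hessian_psd_general {Nb : ℕ} (G₀ : Matrix (Fin Nb) (Fin Nb) ℝ)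
    (hG₀₁ : G₀ᵀ * G₀ = 1) (hG₀₂ : G₀ * G₀ᵀ = 1) (α : ℝ) :
    let G : Matrix (Fin Nb ⊕ Fin Nb) (Fin Nb ⊕ Fin Nb) ℝ := fromBlocks 0 G₀ᵀ G₀ 0
    let Z' : Matrix (Fin Nb ⊕ Fin Nb) (Fin Nb ⊕ Fin Nb) ℂ :=
      (Complex.I * ((Real.cosh (2 * α) : ℂ))⁻¹) • 1 +
        (Real.tanh (2 * α) : ℂ) • G.map Complex.ofReal
    let M : Matrix (Fin Nb ⊕ Fin Nb) (Fin Nb ⊕ Fin Nb) ℝ :=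
      Matrix.of fun i j => ((Matrix.hadamard (1 + Z' * Z') Z') i j).im
    M = (2 * (Real.cosh (2 * α))⁻¹ * (Real.tanh (2 * α)) ^ 2) •
        Matrix.hadamard (1 + G) (1 + G) ∧
      M.PosSemidef := by
  intro G Z' M
  have hGG : G * G = 1 := fromBlocks_zero_mul_self_eq_one hG₀₁ hG₀₂
  have hdiag : ∀ i, G i i = 0 := by rintro (i | i) <;> rfl
  have hM : M = _ := map_im_one_add_mul_self_hadamard_eq hGG hdiag (2 * α) rfl
  have hG : G.IsHermitian :=
    isHermitian_fromBlocks_iff.mpr ⟨isHermitian_zero, by simp, by simp, isHermitian_zero⟩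
  have hP := hG.posSemidef_one_add_of_mul_self_eq_one hGG
  exact ⟨hM, hM ▸ (hP.hadamard hP).smul (by positivity)⟩

theorem bipartite_selfinverse_hessian_psd {Nb : ℕ} (G₀ : Matrix (Fin Nb) (Fin Nb) ℝ)
    (hG₀₁ : G₀ᵀ * G₀ = 1) (hG₀₂ : G₀ * G₀ᵀ = 1) (α : ℝ) (hα : 0 < α) :
    let G : Matrix (Fin Nb ⊕ Fin Nb) (Fin Nb ⊕ Fin Nb) ℝ := fromBlocks 0 G₀ᵀ G₀ 0
    let Z' : Matrix (Fin Nb ⊕ Fin Nb) (Fin Nb ⊕ Fin Nb) ℂ :=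
      (Complex.I * ((Real.cosh (2 * α) : ℂ))⁻¹) • 1 +
        (Real.tanh (2 * α) : ℂ) • G.map Complex.ofReal
    let M : Matrix (Fin Nb ⊕ Fin Nb) (Fin Nb ⊕ Fin Nb) ℝ :=
      Matrix.of fun i j => ((Matrix.hadamard (1 + Z' * Z') Z') i j).im
    M = (2 * (Real.cosh (2 * α))⁻¹ * (Real.tanh (2 * α)) ^ 2) •
        Matrix.hadamard (1 + G) (1 + G) ∧
      M.PosSemidef :=
  bipartite_selfinverse_hessian_psd_general G₀ hG₀₁ hG₀₂ α
end
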